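/- arXiv:2602.06246 — 4 statements merged into one kernel-verified Lean document; each statement's English description precedes it below -/
import Mathlib

section
/- (Subsampling Lemma) Let f : {0,1}^n → ℝ with Möbius coefficients F, i.e., f(x) = Σ_{k ≤ x} F(k) for all x. Let H ∈ {0,1}^{n×t} and ℓ ∈ {0,1}^t, and define the query vector x = ¬(H · ¬ℓ) over the Boolean semiring. Then f(x) = Σ_{k ∈ {0,1}^n : Hᵀk ≤ ℓ} F(k), where the inequality Hᵀk ≤ ℓ is componentwise and Hᵀk is computed over the Boolean semiring. -/
/-!
Both `k ≤ ¬(H·¬ℓ)` and `Hᵀk ≤ ℓ` unfold to the same condition `H i j ∧ k i → ℓ j` for all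
`i, j` (the two maps form a Galois connection), so the sum defining `f` at the query vector
runs over exactly the `k` with `Hᵀk ≤ ℓ`.
-/

/-- Boolean-semiring matrix-vector product: `(H·ℓ)_i = ⋁_j (H_{ij} ∧ ℓ_j)`. -/
noncomputable def bmulVec {n t : ℕ} (H : Fin n → Fin t → Bool) (l : Fin t → Bool) :
    Fin n → Bool :=
  fun i => Finset.univ.sup fun j => H i j && l j

/-- Boolean-semiring transpose product: `(Hᵀk)_j = ⋁_i (H_{ij} ∧ k_i)`. -/
noncomputable def bvecMulT {n t : ℕ} (H : Fin n → Fin t → Bool) (k : Fin n → Bool) :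
    Fin t → Bool :=
  fun j => Finset.univ.sup fun i => H i j && k i

theorem bvecMulT_le_iff {n t : ℕ} (H : Fin n → Fin t → Bool) (k : Fin n → Bool) (j : Fin t)
    (b : Bool) : bvecMulT H k j ≤ b ↔ ∀ i, H i j → k i → b := by
  simp only [bvecMulT, Finset.sup_le_iff, Finset.mem_univ, true_implies, Bool.le_iff_imp,
    Bool.and_eq_true, and_imp]

theorem le_not_bmulVec_not_iff {n t : ℕ} (H : Fin n → Fin t → Bool) (l : Fin t → Bool)
    (i : Fin n) (a : Bool) : a ≤ !bmulVec H (fun j => !l j) i ↔ ∀ j, H i j → a → l j := by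
  rw [← Bool.compl_eq_bnot, le_compl_comm]
  simp only [bmulVec, Finset.sup_le_iff, Finset.mem_univ, true_implies, Bool.compl_eq_bnot]
  refine forall_congr' fun j => ?_
  cases H i j <;> cases l j <;> cases a <;> decide

theorem le_not_bmulVec_not_iff_bvecMulT_le {n t : ℕ} (H : Fin n → Fin t → Bool)
    (k : Fin n → Bool) (l : Fin t → Bool) :
    (∀ i, k i ≤ !bmulVec H (fun j => !l j) i) ↔ ∀ j, bvecMulT H k j ≤ l j := by
  simp only [le_not_bmulVec_not_iff, bvecMulT_le_iff]
  exact forall_comm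

/-- Subsampling Lemma: querying `f` at `x = ¬(H·¬ℓ)` sums the Möbius coefficients
over all `k` with `Hᵀk ≤ ℓ`. -/
theorem subsampling (n t : ℕ) (f F : (Fin n → Bool) → ℝ)
    (hF : ∀ x : Fin n → Bool,
      f x = ∑ k ∈ Finset.univ.filter (fun k : Fin n → Bool => ∀ i, k i ≤ x i), F k)
    (H : Fin n → Fin t → Bool) (l : Fin t → Bool) :
    f (fun i => !(bmulVec H (fun j => !(l j)) i)) =
      ∑ k ∈ Finset.univ.filter (fun k : Fin n → Bool => ∀ j, bvecMulT H k j ≤ l j), F k := by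
  simp only [hF, le_not_bmulVec_not_iff_bvecMulT_le]
end

section
/- (PASMT Bin Refinement) Let f : {0,1}^n → ℝ with Möbius coefficients F. Let H ∈ {0,1}^{n×(t+1)} and write H_t for its first t columns. For ℓ ∈ {0,1}^t define the bin B(ℓ) = {k ∈ {0,1}^n : H_tᵀk = ℓ} and for ℓ' ∈ {0,1}^{t+1} define V(ℓ') = Σ_{k : H_{t+1}ᵀk = ℓ'} F(k), all Boolean-semiring products. Let L ⊆ {0,1}^t be a set of labels such that every k with F(k) ≠ 0 satisfies H_tᵀk ∈ L. For each ℓ ∈ L set x_ℓ = ¬(H_{t+1} · ¬(ℓ‖0)), where ℓ‖0 appends a 0 bit. Then for every ℓ ∈ L: f(x_ℓ) = Σ_{ℓ' ∈ L : ℓ' ≤ ℓ} V(ℓ'‖0), where ℓ' ≤ ℓ is the componentwise order. -/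
lemma sup_bool_eq_false_iff {α : Type*} [Fintype α] (f : α → Bool) :
    Finset.univ.sup f = false ↔ ∀ i, f i = false := by
  rw [show (false : Bool) = ⊥ from rfl, Finset.sup_eq_bot_iff]
  simp

lemma eq_snoc_iff {t : ℕ} (v : Fin (t+1) → Bool) (l' : Fin t → Bool) (b : Bool) :
    v = Fin.snoc l' b ↔ (∀ j, v j.castSucc = l' j) ∧ v (Fin.last t) = b := by
  constructor
  · rintro rfl; simp
  · rintro ⟨h1, h2⟩; funext j
    cases j using Fin.lastCases with
    | last => simpa using h2
    | cast j => simpa using h1 j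

open Classical in
/-- PASMT Bin Refinement: with bins defined by the first `t` columns of `H`,
labels `L` covering all non-zero coefficients, and query vectors
`x_ℓ = ¬(H_{t+1}·¬(ℓ‖0))`, each measurement is the sum of the left-child bin
sums of the labels `ℓ' ∈ L` with `ℓ' ≤ ℓ` componentwise. -/
theorem pasmt_bin_refinement (n t : ℕ) (f F : (Fin n → Bool) → ℝ)
    (hF : ∀ x : Fin n → Bool,
      f x = ∑ k ∈ Finset.univ.filter (fun k : Fin n → Bool => ∀ i, k i ≤ x i), F k)
    (H : Fin n → Fin (t + 1) → Bool)
    (L : Finset (Fin t → Bool))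
    (hL : ∀ k : Fin n → Bool, F k ≠ 0 →
      bvecMulT (fun i (j : Fin t) => H i j.castSucc) k ∈ L)
    (l : Fin t → Bool) (hl : l ∈ L) :
    f (fun i => !(bmulVec H (fun j => !((Fin.snoc l false : Fin (t+1) → Bool) j)) i)) =
      ∑ l' ∈ L.filter (fun l' => ∀ j, l' j ≤ l j),
        ∑ k ∈ Finset.univ.filter
          (fun k : Fin n → Bool => bvecMulT H k = (Fin.snoc l' false : Fin (t+1) → Bool)), F k := by
  classical
  rw [hF]
  set s : Fin (t+1) → Bool := Fin.snoc l false with hs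
  -- pointwise key equivalence
  have key : ∀ k : Fin n → Bool,
      (∀ i, k i ≤ !(bmulVec H (fun j => !(s j)) i)) ↔ (∀ j, bvecMulT H k j ≤ s j) := by
    intro k
    have base : ((∀ i, k i ≤ !(bmulVec H (fun j => !(s j)) i)) ↔
        ∀ i j, ¬(k i = true ∧ H i j = true ∧ s j = false)) := by
      simp only [bmulVec, Bool.le_iff_imp, Bool.not_eq_true', sup_bool_eq_false_iff]
      constructor
      · intro h i j ⟨hk, hH, hsj⟩
        have := h i hk j
        simp [hH, hsj] at this
      · intro h i hk j
        cases hH : H i j with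
        | false => simp [hH]
        | true =>
          cases hsj : s j with
          | false => exact (h i j ⟨hk, hH, hsj⟩).elim
          | true => simp [hH, hsj]
    rw [base]
    simp only [bvecMulT, Bool.le_iff_imp]
    constructor
    · intro h j hsup
      by_contra hsj
      rw [Bool.not_eq_true] at hsj
      have : Finset.univ.sup (fun i => H i j && k i) ≠ false := by simp [hsup]
      rw [Ne, sup_bool_eq_false_iff] at this
      push_neg at this
      obtain ⟨i, hi⟩ := this
      rw [Bool.ne_false_iff, Bool.and_eq_true] at hi
      exact h i j ⟨hi.2, hi.1, hsj⟩
    · intro h i j ⟨hk, hH, hsj⟩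
      have hsup : Finset.univ.sup (fun i => H i j && k i) = true := by
        have hle := Finset.le_sup (f := fun i => H i j && k i) (Finset.mem_univ i)
        exact le_antisymm (Bool.le_true _) (by simpa [hH, hk] using hle)
      have := h j hsup
      simp [this] at hsj
  -- split the ≤ condition into castSucc part and last part
  have split : ∀ k : Fin n → Bool, (∀ j, bvecMulT H k j ≤ s j) ↔
      ((∀ j : Fin t, bvecMulT H k j.castSucc ≤ l j) ∧ bvecMulT H k (Fin.last t) = false) := by
    intro k
    constructor
    · intro h
      refine ⟨fun j => by simpa [hs] using h j.castSucc, ?_⟩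
      have h2 := h (Fin.last t)
      rw [hs, Fin.snoc_last] at h2
      exact le_bot_iff.mp h2
    · rintro ⟨h1, h2⟩ j
      cases j using Fin.lastCases with
      | last => simp [hs, h2]
      | cast j => simpa [hs] using h1 j
  -- projection to first t coords
  set p : (Fin n → Bool) → (Fin t → Bool) :=
    fun k => bvecMulT (fun i (j : Fin t) => H i j.castSucc) k with hp
  have hpk : ∀ k j, p k j = bvecMulT H k j.castSucc := fun k j => rfl
  -- the refined set C
  set C : Finset (Fin n → Bool) :=
    Finset.univ.filter (fun k => p k ∈ L ∧ ∀ j, bvecMulT H k j ≤ s j) with hC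
  -- RHS equals sum over C
  have hmaps : ∀ k ∈ C, p k ∈ L.filter (fun l' => ∀ j, l' j ≤ l j) := by
    intro k hk
    rw [hC, Finset.mem_filter] at hk
    refine Finset.mem_filter.mpr ⟨hk.2.1, fun j => ?_⟩
    rw [hpk]
    exact ((split k).mp hk.2.2).1 j
  have hfib := Finset.sum_fiberwise_of_maps_to hmaps F
  have hinner : ∀ l' ∈ L.filter (fun l' => ∀ j, l' j ≤ l j),
      (∑ k ∈ C.filter (fun k => p k = l'), F k) =
      ∑ k ∈ Finset.univ.filter
        (fun k : Fin n → Bool => bvecMulT H k = (Fin.snoc l' false : Fin (t+1) → Bool)), F k := by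
    intro l' hl'
    rw [Finset.mem_filter] at hl'
    congr 1
    ext k
    simp only [hC, Finset.mem_filter, Finset.mem_univ, true_and]
    rw [eq_snoc_iff, split]
    constructor
    · rintro ⟨⟨hpL, _, hlast⟩, hpkeq⟩
      exact ⟨fun j => by rw [← hpk, hpkeq], hlast⟩
    · rintro ⟨hcast, hlast⟩
      have hpeq : p k = l' := funext fun j => by rw [hpk, hcast]
      refine ⟨⟨hpeq ▸ hl'.1, fun j => ?_, hlast⟩, hpeq⟩
      rw [hcast]; exact hl'.2 j
  rw [Finset.sum_congr rfl hinner] at hfib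
  rw [hfib]
  -- LHS sum over A equals sum over C
  refine (Finset.sum_subset ?_ ?_).symm
  · intro k hk
    rw [hC, Finset.mem_filter] at hk
    rw [Finset.mem_filter]
    exact ⟨Finset.mem_univ k, (key k).mpr hk.2.2⟩
  · intro k hk hnk
    by_contra hFk
    rw [Finset.mem_filter] at hk
    have h1 : p k ∈ L := hL k hFk
    have h2 : ∀ j, bvecMulT H k j ≤ s j := (key k).mp hk.2
    exact hnk (by rw [hC, Finset.mem_filter]; exact ⟨Finset.mem_univ k, h1, h2⟩)
end

section
/- (FASMT Bin Refinement via the residual function) Let f : {0,1}^n → ℝ with Möbius coefficients F. Let H ∈ {0,1}^{n×t}, ℓ ∈ {0,1}^t, and h ∈ {0,1}^n, and define the query vector x = ¬((H‖h) · ¬(ℓ‖0)), where H‖h appends h as a new column and ℓ‖0 appends a 0 bit, with all products over the Boolean semiring. Suppose T : {0,1}^n → ℝ satisfies: T(k) = F(k) for every k with Hᵀk ≺ ℓ (strict lexicographic order on {0,1}^t), and T(k) = 0 for every k with ℓ ⪯ Hᵀk. Then the residual function f_T(x) := f(x) − Σ_{k ≤ x} T(k) satisfies f_T(x) = Σ_{k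 : Hᵀk = ℓ and hᵀk = 0} F(k), and consequently Σ_{k : Hᵀk = ℓ, hᵀk = 1} F(k) = (Σ_{k : Hᵀk = ℓ} F(k)) − f_T(x). -/
/-- The Boolean inner product `aᵀb = ⋁_i (a_i ∧ b_i)` over the Boolean semiring. -/
noncomputable def binner {n : ℕ} (a b : Fin n → Bool) : Bool :=
  Finset.univ.sup fun i => a i && b i

/-- Strict lexicographic order on binary strings of equal length. -/
def lexLT {t : ℕ} (a b : Fin t → Bool) : Prop :=
  ∃ j : Fin t, a j < b j ∧ ∀ i : Fin t, i < j → a i = b i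

/-- Weak lexicographic order: equal or strictly lexicographically smaller. -/
def lexLE {t : ℕ} (a b : Fin t → Bool) : Prop :=
  a = b ∨ lexLT a b


lemma lexLE_of_pointwise_le {t : ℕ} (a b : Fin t → Bool) (hle : ∀ j, a j ≤ b j) :
    lexLE a b := by
  by_cases hab : a = b
  · exact Or.inl hab
  · right
    have hne : (Finset.univ.filter (fun j => a j ≠ b j)).Nonempty := by
      obtain ⟨j, hj⟩ := Function.ne_iff.mp hab
      exact ⟨j, by simp [hj]⟩
    refine ⟨(Finset.univ.filter (fun j => a j ≠ b j)).min' hne, ?_, ?_⟩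
    · have hj := Finset.min'_mem _ hne
      simp only [Finset.mem_filter, Finset.mem_univ, true_and] at hj
      exact lt_of_le_of_ne (hle _) hj
    · intro i hi
      by_contra hib
      have hle' : (Finset.univ.filter (fun j => a j ≠ b j)).min' hne ≤ i :=
        Finset.min'_le _ i (by simp [hib])
      exact absurd hi (not_lt.mpr hle')

open Classical in
/-- FASMT Bin Refinement via the residual function: querying the residual
`f_T` at `x = ¬((H‖h)·¬(ℓ‖0))` yields the left-child bin sum
`V(ℓ‖0) = ∑_{Hᵀk = ℓ, hᵀk = 0} F(k)`, and the right-child bin sum follows by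
subtraction. -/
theorem fasmt_bin_refinement (n t : ℕ) (f F : (Fin n → Bool) → ℝ)
    (hF : ∀ x : Fin n → Bool,
      f x = ∑ k ∈ Finset.univ.filter (fun k : Fin n → Bool => ∀ i, k i ≤ x i), F k)
    (H : Fin n → Fin t → Bool) (l : Fin t → Bool) (h : Fin n → Bool)
    (T : (Fin n → Bool) → ℝ)
    (hT₁ : ∀ k : Fin n → Bool, lexLT (bvecMulT H k) l → T k = F k)
    (hT₂ : ∀ k : Fin n → Bool, lexLE l (bvecMulT H k) → T k = 0)
    (x : Fin n → Bool)
    (hx : x = fun i =>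
      !(bmulVec (fun i' => (Fin.snoc (H i') (h i') : Fin (t + 1) → Bool))
          (fun j => !((Fin.snoc l false : Fin (t + 1) → Bool) j)) i)) :
    f x - (∑ k ∈ Finset.univ.filter (fun k : Fin n → Bool => ∀ i, k i ≤ x i), T k) =
        ∑ k ∈ Finset.univ.filter
          (fun k : Fin n → Bool => bvecMulT H k = l ∧ binner h k = false), F k ∧
    (∑ k ∈ Finset.univ.filter
        (fun k : Fin n → Bool => bvecMulT H k = l ∧ binner h k = true), F k) =
      (∑ k ∈ Finset.univ.filter (fun k : Fin n → Bool => bvecMulT H k = l), F k) -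
        (f x - ∑ k ∈ Finset.univ.filter (fun k : Fin n → Bool => ∀ i, k i ≤ x i), T k) := by
  have supFalse : ∀ {m : ℕ} (g : Fin m → Bool),
      Finset.univ.sup g = false ↔ ∀ i, g i = false := by
    intro m g
    simpa using Finset.sup_eq_bot_iff g Finset.univ
  -- characterization of x
  have hxi : ∀ i, x i = true ↔ ((∀ j, H i j ≤ l j) ∧ h i = false) := by
    intro i
    rw [hx]
    simp only [bmulVec, Bool.not_eq_true']
    rw [supFalse]
    constructor
    · intro hall
      refine ⟨fun j => ?_, ?_⟩
      · have := hall j.castSucc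
        simp only [Fin.snoc_castSucc] at this
        cases hH : H i j <;> cases hl : l j <;> simp_all
      · have := hall (Fin.last t)
        simpa [Fin.snoc_last] using this
    · rintro ⟨h1, h2⟩ j
      rcases Fin.eq_castSucc_or_eq_last j with ⟨j', rfl⟩ | rfl
      · have := h1 j'
        simp only [Fin.snoc_castSucc]
        revert this
        cases H i j' <;> cases l j' <;> decide
      · simp [Fin.snoc_last, h2]
  -- characterization of k ≤ x
  have hchar : ∀ k : Fin n → Bool,
      (∀ i, k i ≤ x i) ↔ ((∀ j, bvecMulT H k j ≤ l j) ∧ binner h k = false) := by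
    intro k
    constructor
    · intro hk
      constructor
      · intro j
        apply Finset.sup_le
        intro i _
        cases hki : k i
        · simp
        · have hxit : x i = true := le_antisymm (by simp) (hki ▸ hk i)
          have := (hxi i).1 hxit
          simpa [hki] using this.1 j
      · rw [binner, supFalse]
        intro i
        cases hki : k i
        · simp
        · have hxit : x i = true := le_antisymm (by simp) (hki ▸ hk i)
          have := (hxi i).1 hxit
          simp [this.2]
    · rintro ⟨h1, h2⟩ i
      cases hki : k i
      · simp
      · have hxit : x i = true := by
          rw [hxi]
          constructor
          · intro j
            have hterm : (H i j && k i) ≤ bvecMulT H k j :=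
              Finset.le_sup (f := fun i => H i j && k i) (Finset.mem_univ i)
            have := le_trans hterm (h1 j)
            simpa [hki] using this
          · rw [binner, supFalse] at h2
            have := h2 i
            simpa [hki] using this
        simp [hxit]
  -- the main sum identity
  have key : f x - (∑ k ∈ Finset.univ.filter (fun k : Fin n → Bool => ∀ i, k i ≤ x i), T k) =
      ∑ k ∈ Finset.univ.filter
        (fun k : Fin n → Bool => bvecMulT H k = l ∧ binner h k = false), F k := by
    rw [hF x, ← Finset.sum_sub_distrib]
    rw [← Finset.sum_filter_add_sum_filter_not
      (Finset.univ.filter (fun k : Fin n → Bool => ∀ i, k i ≤ x i))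
      (fun k => bvecMulT H k = l)]
    have hz : ∀ k ∈ (Finset.univ.filter (fun k : Fin n → Bool => ∀ i, k i ≤ x i)).filter
        (fun k => ¬ bvecMulT H k = l), F k - T k = 0 := by
      intro k hk
      simp only [Finset.mem_filter, Finset.mem_univ, true_and] at hk
      have hle : ∀ j, bvecMulT H k j ≤ l j := ((hchar k).1 hk.1).1
      rcases lexLE_of_pointwise_le _ _ hle with heq | hlt
      · exact absurd heq hk.2
      · rw [hT₁ k hlt]; ring
    rw [Finset.sum_eq_zero hz, add_zero]
    have hset : (Finset.univ.filter (fun k : Fin n → Bool => ∀ i, k i ≤ x i)).filter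
        (fun k => bvecMulT H k = l) =
        Finset.univ.filter
          (fun k : Fin n → Bool => bvecMulT H k = l ∧ binner h k = false) := by
      ext k
      simp only [Finset.mem_filter, Finset.mem_univ, true_and]
      constructor
      · rintro ⟨hk, heq⟩
        exact ⟨heq, ((hchar k).1 hk).2⟩
      · rintro ⟨heq, hbin⟩
        refine ⟨(hchar k).2 ⟨?_, hbin⟩, heq⟩
        intro j; rw [heq]
    rw [hset]
    apply Finset.sum_congr rfl
    intro k hk
    simp only [Finset.mem_filter, Finset.mem_univ, true_and] at hk
    have : T k = 0 := hT₂ k (Or.inl hk.1.symm)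
    rw [this]; ring
  refine ⟨key, ?_⟩
  have hsplit : (∑ k ∈ Finset.univ.filter (fun k : Fin n → Bool => bvecMulT H k = l), F k) =
      (∑ k ∈ Finset.univ.filter
        (fun k : Fin n → Bool => bvecMulT H k = l ∧ binner h k = true), F k) +
      (∑ k ∈ Finset.univ.filter
        (fun k : Fin n → Bool => bvecMulT H k = l ∧ binner h k = false), F k) := by
    rw [← Finset.sum_filter_add_sum_filter_not
      (Finset.univ.filter (fun k : Fin n → Bool => bvecMulT H k = l))
      (fun k => binner h k = true)]
    have e1 : (Finset.univ.filter (fun k : Fin n → Bool => bvecMulT H k = l)).filter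
        (fun k => binner h k = true) =
        Finset.univ.filter
          (fun k : Fin n → Bool => bvecMulT H k = l ∧ binner h k = true) := by
      ext k
      simp only [Finset.mem_filter, Finset.mem_univ, true_and]
    have e2 : (Finset.univ.filter (fun k : Fin n → Bool => bvecMulT H k = l)).filter
        (fun k => ¬ binner h k = true) =
        Finset.univ.filter
          (fun k : Fin n → Bool => bvecMulT H k = l ∧ binner h k = false) := by
      ext k
      simp only [Finset.mem_filter, Finset.mem_univ, true_and, Bool.not_eq_true]
    rw [e1, e2]
  rw [key, hsplit]; ring
end

section
/- (Query complexity lower bound, pigeonhole form) Let n, s, d be positive integers with d ≤ n and s ≤ C(n,d), and let 𝓕 be the family of functions f : {0,1}^n → ℝ whose Möbius coefficients have exactly s non-zero values, all lying in {1,…,s}, all supported on vectors of Hamming weight at most d (distinct coefficient vectors give distinct functions, so |𝓕| = s^s·C(N,s) with N the number of available supports, and |𝓕| ≥ (n/d)^{sd}). If there exists an injective map Φ : 𝓕 → ({0,1,…,s²})^q (for instance, the transcript map of a successful deterministic q-query evaluation algorithm, since each evaluation query on f ∈ 𝓕 returns an integer in {0,…,s²}), then (s²+1)^q ≥ |𝓕|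 ≥ (n/d)^{sd}, and hence q ≥ s·d·log₂(n/d) / log₂(s²+1). -/
/-- Hamming weight of a binary vector. -/
def hammingWt {n : ℕ} (k : Fin n → Bool) : ℕ :=
  (Finset.univ.filter fun i => k i = true).card

lemma pow_le_choose_mul_pow : ∀ k m : ℕ, k ≤ m → m ^ k ≤ m.choose k * k ^ k := by
  intro k
  induction k with
  | zero => intro m _; simp
  | succ k ih =>
    intro m hm
    rcases k.eq_zero_or_pos with rfl | hk
    · simp
    obtain ⟨m', rfl⟩ : ∃ m', m = m' + 1 := ⟨m - 1, by omega⟩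
    have hkm : k ≤ m' := by omega
    have IH := ih m' hkm
    have key : m' * (k + 1) ≥ (m' + 1) * k := by nlinarith
    have h1 : k ^ k * (m' + 1) ^ (k + 1) ≤ k ^ k * ((m' + 1).choose (k + 1) * (k + 1) ^ (k + 1)) := by
      calc k ^ k * (m' + 1) ^ (k + 1)
          = (m' + 1) * ((m' + 1) * k) ^ k := by rw [Nat.mul_pow]; ring
        _ ≤ (m' + 1) * (m' * (k + 1)) ^ k := by
            exact Nat.mul_le_mul_left _ (Nat.pow_le_pow_left key k)
        _ = (m' + 1) * (m' ^ k * (k + 1) ^ k) := by rw [Nat.mul_pow]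
        _ ≤ (m' + 1) * (m'.choose k * k ^ k * (k + 1) ^ k) := by
            exact Nat.mul_le_mul_left _ (Nat.mul_le_mul_right _ IH)
        _ = ((m' + 1) * m'.choose k) * (k ^ k * (k + 1) ^ k) := by ring
        _ = ((m' + 1).choose (k + 1) * (k + 1)) * (k ^ k * (k + 1) ^ k) := by
            rw [Nat.add_one_mul_choose_eq]
        _ = k ^ k * ((m' + 1).choose (k + 1) * (k + 1) ^ (k + 1)) := by ring
    exact Nat.le_of_mul_le_mul_left h1 (Nat.pow_pos hk)

lemma mobius_inj {n : ℕ} {F G : (Fin n → Bool) → ℝ}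
    (h : ∀ x : Fin n → Bool,
      ∑ k ∈ Finset.univ.filter (fun k : Fin n → Bool => ∀ i, k i ≤ x i), F k =
      ∑ k ∈ Finset.univ.filter (fun k : Fin n → Bool => ∀ i, k i ≤ x i), G k) :
    F = G := by
  classical
  have main : ∀ m : ℕ, ∀ x : Fin n → Bool, hammingWt x = m → F x = G x := by
    intro m
    induction m using Nat.strong_induction_on with
    | _ m ih =>
      intro x hx
      have hxmem : x ∈ Finset.univ.filter (fun k : Fin n → Bool => ∀ i, k i ≤ x i) := by
        simp
      have hlt : ∀ k ∈ (Finset.univ.filter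
          (fun k : Fin n → Bool => ∀ i, k i ≤ x i)).erase x, F k = G k := by
        intro k hk
        rw [Finset.mem_erase, Finset.mem_filter] at hk
        obtain ⟨hne, _, hle⟩ := hk
        have hss : (Finset.univ.filter fun i => k i = true) ⊆
            (Finset.univ.filter fun i => x i = true) := by
          intro i hi
          rw [Finset.mem_filter] at hi ⊢
          refine ⟨hi.1, ?_⟩
          have hb := hle i
          rw [hi.2] at hb
          exact le_antisymm (by simp) hb
        have hab : (Finset.univ.filter fun i => k i = true) ≠
            (Finset.univ.filter fun i => x i = true) := by
          intro hcon
          apply hne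
          funext i
          have h1 : (i ∈ Finset.univ.filter fun j => k j = true) ↔
              (i ∈ Finset.univ.filter fun j => x j = true) := by rw [hcon]
          simp only [Finset.mem_filter, Finset.mem_univ, true_and] at h1
          exact Bool.coe_iff_coe.mp (by simpa using h1)
        have hsub := Finset.ssubset_iff_subset_ne.mpr ⟨hss, hab⟩
        have : hammingWt k < m := hx ▸ Finset.card_lt_card hsub
        exact ih _ this k rfl
      have hsum := h x
      rw [← Finset.add_sum_erase _ F hxmem, ← Finset.add_sum_erase _ G hxmem,
        Finset.sum_congr rfl hlt] at hsum
      linarith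
  funext x
  exact main (hammingWt x) x rfl

lemma card_weight_eq (n d : ℕ) :
    (Finset.univ.filter fun k : Fin n → Bool => hammingWt k = d).card = n.choose d := by
  classical
  have : (Finset.univ.filter fun k : Fin n → Bool => hammingWt k = d).card =
      ((Finset.univ : Finset (Fin n)).powersetCard d).card := by
    apply Finset.card_bij (fun k _ => Finset.univ.filter fun i => k i = true)
    · intro k hk
      rw [Finset.mem_filter] at hk
      rw [Finset.mem_powersetCard]
      exact ⟨Finset.subset_univ _, hk.2⟩
    · intro k₁ h₁ k₂ h₂ he
      funext i
      have : (i ∈ Finset.univ.filter fun j => k₁ j = true) ↔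
          (i ∈ Finset.univ.filter fun j => k₂ j = true) := by rw [he]
      simp only [Finset.mem_filter, Finset.mem_univ, true_and] at this
      exact Bool.coe_iff_coe.mp (by simpa using this)
    · intro S hS
      rw [Finset.mem_powersetCard] at hS
      refine ⟨fun i => decide (i ∈ S), ?_, ?_⟩
      · rw [Finset.mem_filter]
        refine ⟨Finset.mem_univ _, ?_⟩
        rw [hammingWt, ← hS.2]
        congr 1
        ext i
        simp
      · ext i
        simp
  rw [this, Finset.card_powersetCard, Finset.card_univ, Fintype.card_fin]

noncomputable def Fc (n s : ℕ) (p : Σ S : Finset (Fin n → Bool), ∀ a ∈ S, Fin s) :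
    (Fin n → Bool) → ℝ :=
  fun k => if h : k ∈ p.1 then ((p.2 k h : ℕ) + 1 : ℝ) else 0

lemma Fc_ne_zero_iff {n s : ℕ} (p : Σ S : Finset (Fin n → Bool), ∀ a ∈ S, Fin s)
    (k : Fin n → Bool) : Fc n s p k ≠ 0 ↔ k ∈ p.1 := by
  unfold Fc
  by_cases h : k ∈ p.1 <;> simp [h]
  positivity

lemma Fc_inj {n s : ℕ} (p₁ p₂ : Σ S : Finset (Fin n → Bool), ∀ a ∈ S, Fin s)
    (h : Fc n s p₁ = Fc n s p₂) : p₁ = p₂ := by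
  obtain ⟨S₁, v₁⟩ := p₁
  obtain ⟨S₂, v₂⟩ := p₂
  have hS : S₁ = S₂ := by
    ext k
    rw [← Fc_ne_zero_iff ⟨S₁, v₁⟩ k, ← Fc_ne_zero_iff ⟨S₂, v₂⟩ k, h]
  subst hS
  have hv : v₁ = v₂ := by
    funext a ha
    have := congrFun h a
    unfold Fc at this
    simp only [dif_pos ha] at this
    have : (v₁ a ha : ℕ) = (v₂ a ha : ℕ) := by exact_mod_cast add_right_cancel this
    exact Fin.val_injective this
  rw [hv]

open Classical in
/-- Query complexity lower bound (pigeonhole form): let `𝓕` be the family of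
functions on `{0,1}^n` whose Möbius coefficients have exactly `s` non-zero
values, all in `{1,…,s}` and supported on vectors of Hamming weight at most `d`.
If there is an injective map `Φ : 𝓕 → ({0,…,s²})^q` (e.g. the transcript map of a
successful deterministic `q`-query algorithm), then
`(s²+1)^q ≥ |𝓕| ≥ (n/d)^{sd}`, hence `q ≥ s·d·log₂(n/d)/log₂(s²+1)`. -/
theorem query_complexity_lower_bound (n s d q : ℕ)
    (hn : 0 < n) (hs : 0 < s) (hd : 0 < d) (hdn : d ≤ n) (hsN : s ≤ n.choose d)
    (𝓕 : Set ((Fin n → Bool) → ℝ))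
    (h𝓕 : 𝓕 = {f | ∃ F : (Fin n → Bool) → ℝ,
      (∀ x : Fin n → Bool,
        f x = ∑ k ∈ Finset.univ.filter (fun k : Fin n → Bool => ∀ i, k i ≤ x i), F k) ∧
      (Finset.univ.filter fun k : Fin n → Bool => F k ≠ 0).card = s ∧
      (∀ k : Fin n → Bool, F k ≠ 0 → ∃ m : ℕ, 1 ≤ m ∧ m ≤ s ∧ F k = m) ∧
      (∀ k : Fin n → Bool, F k ≠ 0 → hammingWt k ≤ d)})
    (Φ : 𝓕 → (Fin q → Fin (s ^ 2 + 1))) (hΦ : Function.Injective Φ) :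
    (Nat.card 𝓕 : ℝ) ≤ ((s : ℝ) ^ 2 + 1) ^ q ∧
    ((n : ℝ) / d) ^ (s * d) ≤ (Nat.card 𝓕 : ℝ) ∧
    (s : ℝ) * (d : ℝ) * Real.logb 2 ((n : ℝ) / d) / Real.logb 2 ((s : ℝ) ^ 2 + 1) ≤
      (q : ℝ) := by
  have hFin : Finite ↥𝓕 := Finite.of_injective Φ hΦ
  -- the family of coefficient patterns
  set W : Finset (Fin n → Bool) := Finset.univ.filter (fun k => hammingWt k = d) with hWdef
  have hW : W.card = n.choose d := card_weight_eq n d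
  set X : Finset (Σ S : Finset (Fin n → Bool), ∀ a ∈ S, Fin s) :=
    (W.powersetCard s).sigma (fun S => S.pi fun _ => (Finset.univ : Finset (Fin s))) with hXdef
  have hXcard : X.card = (n.choose d).choose s * s ^ s := by
    rw [hXdef, Finset.card_sigma]
    have : ∀ S ∈ W.powersetCard s,
        (S.pi fun _ => (Finset.univ : Finset (Fin s))).card = s ^ s := by
      intro S hS
      rw [Finset.mem_powersetCard] at hS
      rw [Finset.card_pi]
      simp [hS.2, Finset.prod_const]
    rw [Finset.sum_congr rfl this, Finset.sum_const, Finset.card_powersetCard, hW, smul_eq_mul]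
  -- the map into 𝓕
  have hmem : ∀ p ∈ X, (fun x => ∑ k ∈ Finset.univ.filter
      (fun k : Fin n → Bool => ∀ i, k i ≤ x i), Fc n s p k) ∈ 𝓕 := by
    intro p hp
    rw [hXdef, Finset.mem_sigma, Finset.mem_powersetCard] at hp
    obtain ⟨⟨hsub, hcard⟩, _⟩ := hp
    rw [h𝓕]
    refine ⟨Fc n s p, fun x => rfl, ?_, ?_, ?_⟩
    · have : (Finset.univ.filter fun k : Fin n → Bool => Fc n s p k ≠ 0) = p.1 := by
        ext k
        simp [Fc_ne_zero_iff]
      rw [this, hcard]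
    · intro k hk
      rw [Fc_ne_zero_iff] at hk
      refine ⟨(p.2 k hk : ℕ) + 1, by omega, ?_, ?_⟩
      · have := (p.2 k hk).isLt
        omega
      · unfold Fc
        rw [dif_pos hk]
        push_cast
        ring
    · intro k hk
      rw [Fc_ne_zero_iff] at hk
      have := hsub hk
      rw [hWdef, Finset.mem_filter] at this
      exact le_of_eq this.2
  -- injection from X into 𝓕
  let g : {p // p ∈ X} → ↥𝓕 := fun p => ⟨_, hmem p.1 p.2⟩
  have hg : Function.Injective g := by
    intro p₁ p₂ he
    have hfe : (fun x : Fin n → Bool => ∑ k ∈ Finset.univ.filter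
        (fun k : Fin n → Bool => ∀ i, k i ≤ x i), Fc n s p₁.1 k) =
        (fun x : Fin n → Bool => ∑ k ∈ Finset.univ.filter
        (fun k : Fin n → Bool => ∀ i, k i ≤ x i), Fc n s p₂.1 k) :=
      congrArg Subtype.val he
    have := mobius_inj (F := Fc n s p₁.1) (G := Fc n s p₂.1) (fun x => congrFun hfe x)
    exact Subtype.ext (Fc_inj _ _ this)
  have hlow : (n.choose d).choose s * s ^ s ≤ Nat.card ↥𝓕 := by
    have := Nat.card_le_card_of_injective g hg
    rwa [Nat.card_eq_finsetCard, hXcard] at this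
  have hup : Nat.card ↥𝓕 ≤ (s ^ 2 + 1) ^ q := by
    have := Nat.card_le_card_of_injective Φ hΦ
    simpa [Nat.card_eq_fintype_card] using this
  -- real-number consequences
  have hd' : (0 : ℝ) < d := by exact_mod_cast hd
  have hs' : (0 : ℝ) < s := by exact_mod_cast hs
  have hnd1 : (1 : ℝ) ≤ (n : ℝ) / d := by
    rw [le_div_iff₀ hd']
    exact_mod_cast by simpa using hdn
  have hkey : ((n : ℝ) / d) ^ (s * d) ≤ ((n.choose d).choose s * s ^ s : ℕ) := by
    have h1 : ((n : ℝ) / d) ^ d ≤ (n.choose d : ℕ) := by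
      rw [div_pow, div_le_iff₀ (by positivity)]
      exact_mod_cast pow_le_choose_mul_pow d n hdn
    have h2 : ((n.choose d : ℝ)) ^ s ≤ ((n.choose d).choose s * s ^ s : ℕ) := by
      exact_mod_cast pow_le_choose_mul_pow s (n.choose d) hsN
    calc ((n : ℝ) / d) ^ (s * d) = (((n : ℝ) / d) ^ d) ^ s := by
          rw [← pow_mul, mul_comm]
      _ ≤ ((n.choose d : ℕ) : ℝ) ^ s := by
          apply pow_le_pow_left₀ (by positivity) h1
      _ ≤ _ := h2
  have hlow' : ((n : ℝ) / d) ^ (s * d) ≤ (Nat.card ↥𝓕 : ℝ) :=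
    le_trans hkey (by exact_mod_cast hlow)
  have hup' : (Nat.card ↥𝓕 : ℝ) ≤ ((s : ℝ) ^ 2 + 1) ^ q := by
    have : (((s ^ 2 + 1) ^ q : ℕ) : ℝ) = ((s : ℝ) ^ 2 + 1) ^ q := by push_cast; ring
    rw [← this]
    exact_mod_cast hup
  refine ⟨hup', hlow', ?_⟩
  -- logarithmic form
  have hbase : (1 : ℝ) < (s : ℝ) ^ 2 + 1 := by nlinarith
  have hMpos : 0 < Real.logb 2 ((s : ℝ) ^ 2 + 1) := Real.logb_pos (by norm_num) hbase
  rw [div_le_iff₀ hMpos]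
  have hchain : ((n : ℝ) / d) ^ (s * d) ≤ ((s : ℝ) ^ 2 + 1) ^ q := le_trans hlow' hup'
  have hlog := Real.logb_le_logb_of_le (b := 2) (by norm_num) (pow_pos (by linarith [hnd1]) _) hchain
  rw [Real.logb_pow, Real.logb_pow] at hlog
  push_cast at hlog ⊢
  nlinarith [hlog]
end
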